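/- arXiv:1810.02654 — 3 statements merged into one kernel-verified Lean document; each statement's English description precedes it below -/
import Mathlib

section
/- Let G be a residually finite group, let H be a retract of G (i.e., there is a homomorphism ρ : G → H restricting to the identity on H), and let A be a subgroup of G with H ⊆ A and |A : H| < ∞. Then A is a virtual retract of G. -/
/-!
The kernel of the retraction meets `H` trivially, so `A ∩ ker ρ` embeds in `A / H` and is finite.
Residual finiteness gives a finite-index normal subgroup `L` missing its nontrivial elements, and
then `M = ker ρ ∩ L` is a normal subgroup with `A ∩ M = 1`. The product `A M` has finite index:
it contains `L ∩ ρ⁻¹(L)`, since `g = (g ρ(g)⁻¹) ρ(g)` with `ρ(g) ∈ H`. Projecting `A M` onto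
`A M / M ≅ A` is the required retraction.
-/

/-- `H` is a virtual retract of `G`: there are a finite-index subgroup `K` of `G` containing `H`
and a homomorphism `ρ : K → G` with image inside `H` restricting to the identity on `H`. -/
def IsVirtualRetract {G : Type*} [Group G] (H : Subgroup G) : Prop :=
  ∃ (K : Subgroup G) (hHK : H ≤ K), K.FiniteIndex ∧
    ∃ ρ : ↥K →* G, (∀ k : ↥K, ρ k ∈ H) ∧ ∀ (h : G) (hh : h ∈ H), ρ ⟨h, hHK hh⟩ = h

/-- A group is residually finite if every non-identity element avoids some
finite-index normal subgroup. -/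
def ResiduallyFinite (G : Type*) [Group G] : Prop :=
  ∀ g : G, g ≠ 1 → ∃ N : Subgroup G, N.Normal ∧ N.FiniteIndex ∧ g ∉ N

open Subgroup

section

variable {G : Type*} [Group G]

theorem ResiduallyFinite.exists_normal_finiteIndex_inf_eq_bot (hG : ResiduallyFinite G)
    (C : Subgroup G) [Finite C] : ∃ L : Subgroup G, L.Normal ∧ L.FiniteIndex ∧ C ⊓ L = ⊥ := by
  choose N hN using fun c : {c : C // (c : G) ≠ 1} => hG c c.2
  refine ⟨⨅ c, N c, normal_iInf_normal fun c => (hN c).1,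
    finiteIndex_iInf fun c => (hN c).2.1, (eq_bot_iff_forall _).2 ?_⟩
  rintro x ⟨hxC, hxN⟩
  by_contra hx
  exact (hN ⟨⟨x, hxC⟩, hx⟩).2.2 (mem_iInf.1 hxN _)

theorem Subgroup.finite_inf_of_relIndex_ne_zero_of_inf_eq_bot {H A N : Subgroup G} (hidx : H.relIndex A ≠ 0)
    (hHN : H ⊓ N = ⊥) : Finite ↥(A ⊓ N) := by
  have := relIndex_inter_ne_zero hidx N
  rw [hHN, relIndex_bot_left] at this
  exact Nat.finite_of_card_ne_zero this

theorem Subgroup.FiniteIndex.comap {G' : Type*} [Group G'] (L : Subgroup G) [L.FiniteIndex]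
    (f : G' →* G) : (L.comap f).FiniteIndex := by
  have := relIndex_comap_ne_zero f (L.relIndex_top_right ▸ FiniteIndex.index_ne_zero)
  rw [comap_top, relIndex_top_right] at this
  exact ⟨this⟩

theorem isVirtualRetract_of_inf_eq_bot {A M : Subgroup G} [M.Normal] (hAM : A ⊓ M = ⊥)
    [(A ⊔ M).FiniteIndex] : IsVirtualRetract A := by
  have hM : M.subgroupOf A = ⊥ := subgroupOf_eq_bot.2 (disjoint_iff.2 (inf_comm A M ▸ hAM))
  let e : A ≃* (A ⊔ M : Subgroup G) ⧸ M.subgroupOf (A ⊔ M) :=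
    (QuotientGroup.quotientBot.symm.trans (QuotientGroup.quotientMulEquivOfEq hM.symm)).trans
      (QuotientGroup.quotientInfEquivProdNormalQuotient A M)
  refine ⟨A ⊔ M, le_sup_left, inferInstance,
    A.subtype.comp (e.symm.toMonoidHom.comp (QuotientGroup.mk' _)), fun k => SetLike.coe_mem _,
    fun a ha => ?_⟩
  show ((e.symm (e ⟨a, ha⟩) : A) : G) = a
  rw [MulEquiv.symm_apply_apply]

section Retraction

variable {H : Subgroup G} {ρ : G →* G}

theorem inf_ker_eq_bot_of_retraction (hρ_id : ∀ h ∈ H, ρ h = h) : H ⊓ ρ.ker = ⊥ :=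
  (eq_bot_iff_forall _).2 fun _ ⟨hH, hker⟩ => (hρ_id _ hH).symm.trans hker

theorem inf_comap_le_sup_ker_inf_of_retraction (hρ_mem : ∀ g, ρ g ∈ H)
    (hρ_id : ∀ h ∈ H, ρ h = h) (L : Subgroup G) : L ⊓ L.comap ρ ≤ H ⊔ (ρ.ker ⊓ L) := by
  intro g hg
  obtain ⟨hgL, hρgL⟩ := mem_inf.1 hg
  have hker : g * (ρ g)⁻¹ ∈ ρ.ker := by
    rw [MonoidHom.mem_ker, map_mul, map_inv, hρ_id _ (hρ_mem g), mul_inv_cancel]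
  rw [sup_comm, ← inv_mul_cancel_right g (ρ g)]
  exact mul_mem_sup (mem_inf.2 ⟨hker, L.mul_mem hgL (L.inv_mem (mem_comap.1 hρgL))⟩) (hρ_mem g)

end Retraction

end

/-- Lemma 3.5: if `G` is residually finite, `H` is a retract of `G` and `H ≤ A ≤ G` with
`|A : H| < ∞`, then `A ≤vr G`. -/
theorem virtualRetract_of_finiteIndex_overgroup_of_retract {G : Type*} [Group G]
    (hG : ResiduallyFinite G) (H A : Subgroup G)
    (ρ : G →* G) (hρ_mem : ∀ g : G, ρ g ∈ H) (hρ_id : ∀ h ∈ H, ρ h = h)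
    (hHA : H ≤ A) (hidx : H.relIndex A ≠ 0) :
    IsVirtualRetract A := by
  have := finite_inf_of_relIndex_ne_zero_of_inf_eq_bot hidx (inf_ker_eq_bot_of_retraction hρ_id)
  obtain ⟨L, _, _, hAL⟩ := hG.exists_normal_finiteIndex_inf_eq_bot (A ⊓ ρ.ker)
  have := FiniteIndex.comap L ρ
  have : (A ⊔ (ρ.ker ⊓ L)).FiniteIndex := finiteIndex_of_le <|
    (inf_comap_le_sup_ker_inf_of_retraction hρ_mem hρ_id L).trans (sup_le_sup_right hHA _)
  exact isVirtualRetract_of_inf_eq_bot (by rwa [← inf_assoc])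
end

section
/- If K is a finite-index subgroup of a group G and K has property (VRC), then G also has property (VRC). -/
/-- Property (VRC): every cyclic subgroup is a virtual retract. -/
def VRC (G : Type*) [Group G] : Prop :=
  ∀ g : G, IsVirtualRetract (Subgroup.zpowers g)

/-!
If `g` has finite order, it suffices to find a finite-index normal subgroup `N` meeting `⟨g⟩`
trivially, since then `⟨g⟩N / N ≅ ⟨g⟩` gives the retraction. Such an `N` exists because (VRC) in
`K` separates each nontrivial torsion element of `K` from `1` by a subgroup of finite index.

If `g` has infinite order, some power `g ^ k` lies in `K`, and (VRC) in `K` yields a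
finite-index subgroup `L` of `G` with a homomorphism `χ : L → ℤ` that does not vanish at `g ^ k`.
On the normal core `M` of `L`, the product `∏ i < k, χ (g^i · g^(-i))` is a homomorphism
`ψ : M → ℤ` invariant under conjugation by `g`. Its kernel `N` is normalized by `g`, meets `⟨g⟩`
trivially, and `⟨g⟩N` has finite index because `ψ (g ^ k) ≠ 0`; so `⟨g⟩` is a virtual retract.
-/

open Subgroup
open scoped Pointwise

section

variable {G : Type*} [Group G]

theorem isVirtualRetract_of_le_normalizer {H N : Subgroup G}
    (hHN : H ≤ normalizer N) (hdisj : H ⊓ N = ⊥) [(H ⊔ N).FiniteIndex] :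
    IsVirtualRetract H := by
  have := normal_subgroupOf_sup_of_le_normalizer hHN
  let π := QuotientGroup.mk' (N.subgroupOf (H ⊔ N))
  have hbij : Function.Bijective (π.comp (inclusion le_sup_left)) := by
    constructor
    · rw [← MonoidHom.ker_eq_bot_iff, eq_bot_iff]
      intro h hh
      rw [MonoidHom.mem_ker, MonoidHom.comp_apply, QuotientGroup.mk'_apply,
        QuotientGroup.eq_one_iff, mem_subgroupOf] at hh
      have : (h : G) ∈ H ⊓ N := ⟨h.2, hh⟩
      rw [hdisj, mem_bot] at this
      exact Subtype.ext this
    · rintro ⟨y⟩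
      have hy : (y : G) ∈ (H : Set G) * (N : Set G) := by
        rw [← coe_mul_of_left_le_normalizer_right H N hHN]; exact y.2
      obtain ⟨h, hh, n, hn, hy⟩ := hy
      refine ⟨⟨h, hh⟩, (QuotientGroup.eq (s := N.subgroupOf (H ⊔ N))).mpr ?_⟩
      simpa [mem_subgroupOf, ← hy] using hn
  let e := MulEquiv.ofBijective _ hbij
  refine ⟨H ⊔ N, le_sup_left, inferInstance, H.subtype.comp (e.symm.toMonoidHom.comp π),
    fun _ ↦ (e.symm _).2, fun h hh ↦ ?_⟩
  change ((e.symm (e ⟨h, hh⟩)) : G) = h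
  rw [MulEquiv.symm_apply_apply]

theorem IsVirtualRetract.exists_finiteIndex_notMem {H : Subgroup G} (hH : IsVirtualRetract H)
    [Finite H] {h : G} (hh : h ∈ H) (h1 : h ≠ 1) : ∃ D : Subgroup G, D.FiniteIndex ∧ h ∉ D := by
  obtain ⟨L, hHL, hL, ρ, hρH, hρ⟩ := hH
  have hrange : ρ.range ≤ H := by rintro _ ⟨k, rfl⟩; exact hρH k
  have := Finite.of_injective _ (inclusion_injective hrange)
  refine ⟨ρ.ker.map L.subtype, ⟨?_⟩, ?_⟩
  · rw [index_map_subtype]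
    exact mul_ne_zero (finiteIndex_ker ρ).index_ne_zero hL.index_ne_zero
  · rintro ⟨k, hk, hkh⟩
    obtain rfl : k = ⟨h, hHL hh⟩ := Subtype.ext hkh
    exact h1 (hρ h hh ▸ hk)

theorem exists_finiteIndex_notMem_of_VRC {K : Subgroup G} (hK : K.FiniteIndex) (hVRC : VRC K)
    {x : G} (hx : IsOfFinOrder x) (hx1 : x ≠ 1) : ∃ D : Subgroup G, D.FiniteIndex ∧ x ∉ D := by
  by_cases hxK : x ∈ K
  · have : Finite (zpowers (⟨x, hxK⟩ : K)) :=
      (Submonoid.isOfFinOrder_coe.mp hx).finite_zpowers.to_subtype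
    obtain ⟨D, hD, hxD⟩ := (hVRC ⟨x, hxK⟩).exists_finiteIndex_notMem (mem_zpowers _)
      (by simpa [Subtype.ext_iff] using hx1)
    refine ⟨D.map K.subtype, ⟨?_⟩, ?_⟩
    · rw [index_map_subtype]
      exact mul_ne_zero hD.index_ne_zero hK.index_ne_zero
    · rintro ⟨y, hy, hyx⟩
      obtain rfl : y = ⟨x, hxK⟩ := Subtype.ext hyx
      exact hxD hy
  · exact ⟨K, hK, hxK⟩

theorem exists_normal_finiteIndex_inf_eq_bot {H : Subgroup G} [Finite H]
    (hsep : ∀ h ∈ H, h ≠ 1 → ∃ D : Subgroup G, D.FiniteIndex ∧ h ∉ D) :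
    ∃ N : Subgroup G, N.Normal ∧ N.FiniteIndex ∧ H ⊓ N = ⊥ := by
  have hsep' (h : H) : ∃ D : Subgroup G, D.FiniteIndex ∧ ((h : G) ≠ 1 → (h : G) ∉ D) := by
    by_cases h1 : (h : G) = 1
    · exact ⟨⊤, inferInstance, fun h1' ↦ absurd h1 h1'⟩
    · obtain ⟨D, hD, hhD⟩ := hsep h h.2 h1
      exact ⟨D, hD, fun _ ↦ hhD⟩
  choose D hD hhD using hsep'
  have := finiteIndex_iInf hD
  refine ⟨(⨅ h, D h).normalCore, normalCore_normal _, inferInstance, eq_bot_iff.mpr ?_⟩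
  rintro h ⟨hH, hN⟩
  by_contra h1
  exact hhD ⟨h, hH⟩ h1 (iInf_le D ⟨h, hH⟩ (normalCore_le _ hN))

theorem isVirtualRetract_zpowers_of_isOfFinOrder {K : Subgroup G} (hK : K.FiniteIndex)
    (hVRC : VRC K) {g : G} (hg : IsOfFinOrder g) : IsVirtualRetract (zpowers g) := by
  have : Finite (zpowers g) := hg.finite_zpowers.to_subtype
  obtain ⟨N, hN, hNfin, hdisj⟩ := exists_normal_finiteIndex_inf_eq_bot fun x hx hx1 ↦
    exists_finiteIndex_notMem_of_VRC hK hVRC (hg.of_mem_zpowers hx) hx1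
  have := finiteIndex_of_le (le_sup_right : N ≤ zpowers g ⊔ N)
  exact isVirtualRetract_of_le_normalizer le_normalizer_of_normal hdisj

namespace MonoidHom

variable {M A : Type*} [Group M] [CommGroup A]

def orbitProd (χ : M →* A) (σ : MulAut M) (k : ℕ) : M →* A :=
  ∏ i ∈ Finset.range k, χ.comp (σ ^ i).toMonoidHom

theorem orbitProd_apply (χ : M →* A) (σ : MulAut M) (k : ℕ) (x : M) :
    χ.orbitProd σ k x = ∏ i ∈ Finset.range k, χ ((σ ^ i) x) := by
  simp [orbitProd, MonoidHom.finsetProd_apply]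

theorem orbitProd_aut_invariant (χ : M →* A) (σ : MulAut M) {k : ℕ}
    (hk : ∀ x, χ ((σ ^ k) x) = χ x) (x : M) : χ.orbitProd σ k (σ x) = χ.orbitProd σ k x := by
  -- applying `σ` shifts the factors by one, and `hk` identifies the new last factor with the
  -- old first one
  have h1 := Finset.prod_range_succ' (fun i ↦ χ ((σ ^ i) x)) k
  have h2 := Finset.prod_range_succ (fun i ↦ χ ((σ ^ i) x)) k
  simp only [pow_succ, MulAut.mul_apply, pow_zero, MulAut.one_apply, hk] at h1 h2
  rw [orbitProd_apply, orbitProd_apply]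
  exact mul_right_cancel (h1.symm.trans h2)

theorem orbitProd_apply_of_fixed (χ : M →* A) {σ : MulAut M} (k : ℕ) {y : M} (hy : σ y = y) :
    χ.orbitProd σ k y = χ y ^ k := by
  have (i : ℕ) : (σ ^ i) y = y := by
    induction i with
    | zero => rfl
    | succ i ih => rw [pow_succ, MulAut.mul_apply, hy, ih]
  simp [orbitProd_apply, this]

end MonoidHom

theorem map_conjNormal_of_mem {A : Type*} [CommGroup A] {M : Subgroup G} [M.Normal]
    (χ : M →* A) {y : G} (hy : y ∈ M) (x : M) : χ (MulAut.conjNormal y x) = χ x := by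
  have : MulAut.conjNormal y x = ⟨y, hy⟩ * x * ⟨y, hy⟩⁻¹ :=
    Subtype.ext (MulAut.conjNormal_apply y x)
  rw [this, map_mul, map_mul, map_inv, mul_inv_cancel_comm]

def IsDetectedByVirtualCharacter (g : G) : Prop :=
  ∃ (L : Subgroup G) (_ : L.FiniteIndex) (hg : g ∈ L) (χ : L →* Multiplicative ℤ), χ ⟨g, hg⟩ ≠ 1

theorem IsVirtualRetract.isDetectedByVirtualCharacter {g : G} (hg : ¬IsOfFinOrder g)
    (h : IsVirtualRetract (zpowers g)) : IsDetectedByVirtualCharacter g := by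
  obtain ⟨L, hle, hL, ρ, hρH, hρ⟩ := h
  let log : zpowers g ≃* Multiplicative ℤ :=
    (MulEquiv.subgroupCongr (range_zpowersHom g)).symm.trans <| MulEquiv.symm <|
      MonoidHom.ofInjective (f := zpowersHom G g) (injective_zpow_iff_not_isOfFinOrder.mpr hg)
  refine ⟨L, hL, hle (mem_zpowers g), log.toMonoidHom.comp (ρ.codRestrict _ hρH), ?_⟩
  have hg1 : g ≠ 1 := fun h1 ↦ hg (h1 ▸ IsOfFinOrder.one)
  rw [MonoidHom.comp_apply, MulEquiv.coe_toMonoidHom, MulEquiv.map_ne_one_iff, Ne,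
    Subtype.ext_iff, MonoidHom.codRestrict_apply]
  simpa [hρ g (mem_zpowers g)] using hg1

theorem IsDetectedByVirtualCharacter.subtype {K : Subgroup G} (hK : K.FiniteIndex) {x : K}
    (h : IsDetectedByVirtualCharacter x) : IsDetectedByVirtualCharacter (x : G) := by
  obtain ⟨L, hL, hxL, χ, hχ⟩ := h
  let e := L.equivMapOfInjective K.subtype K.subtype_injective
  refine ⟨L.map K.subtype, ⟨?_⟩, mem_map_of_mem _ hxL, χ.comp e.symm.toMonoidHom, ?_⟩
  · rw [index_map_subtype]
    exact mul_ne_zero hL.index_ne_zero hK.index_ne_zero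
  · have : e.symm ⟨x, mem_map_of_mem _ hxL⟩ = ⟨x, hxL⟩ := e.symm_apply_eq.mpr rfl
    simpa [this] using hχ

theorem finiteIndex_zpowers_of_ne_one {a : Multiplicative ℤ} (ha : a ≠ 1) :
    (zpowers a).FiniteIndex := by
  have : zpowers a = (AddSubgroup.zmultiples a.toAdd).toSubgroup := by
    ext x
    simp only [mem_zpowers_iff, Multiplicative.mem_toSubgroup, AddSubgroup.mem_zmultiples_iff,
      ← toAdd_zpow, EmbeddingLike.apply_eq_iff_eq]
  rw [this, AddSubgroup.finiteIndex_toSubgroup_iff, AddSubgroup.finiteIndex_iff,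
    Int.index_zmultiples]
  simpa using ha

section InvariantCharacter

variable {M : Subgroup G} (ψ : M →* Multiplicative ℤ) {g : G}

theorem zpowers_le_normalizer_map_ker [M.Normal] (hψ : ∀ x, ψ (MulAut.conjNormal g x) = ψ x) :
    zpowers g ≤ normalizer (ψ.ker.map M.subtype : Set G) := by
  rw [zpowers_le, mem_normalizer_iff]
  intro h
  constructor
  · rintro ⟨x, hx, rfl⟩
    refine ⟨MulAut.conjNormal g x, ?_, MulAut.conjNormal_apply g x⟩
    rwa [SetLike.mem_coe, MonoidHom.mem_ker, hψ]
  · rintro ⟨y, hy, hyh⟩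
    refine ⟨(MulAut.conjNormal g).symm y, ?_, ?_⟩
    · rwa [SetLike.mem_coe, MonoidHom.mem_ker, ← hψ, MulEquiv.apply_symm_apply]
    · rw [coe_subtype, MulAut.conjNormal_symm_apply, show (y : G) = g * h * g⁻¹ from hyh]
      group

theorem zpowers_inf_map_ker_eq_bot {k : ℕ} (hk : g ^ k ∈ M) (hψk : ψ ⟨g ^ k, hk⟩ ≠ 1) :
    zpowers g ⊓ ψ.ker.map M.subtype = ⊥ := by
  rw [eq_bot_iff]
  rintro _ ⟨hx, y, hy, hyx⟩
  obtain ⟨j, rfl⟩ := mem_zpowers_iff.mp hx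
  have hpow : y ^ k = ⟨g ^ k, hk⟩ ^ j := by
    ext
    change (y : G) ^ k = (g ^ k) ^ j
    rw [show (y : G) = g ^ j from hyx, ← zpow_natCast, ← zpow_natCast, ← zpow_mul, ← zpow_mul,
      mul_comm]
  have hj : ψ ⟨g ^ k, hk⟩ ^ j = 1 := by rw [← map_zpow, ← hpow, map_pow, hy, one_pow]
  rw [IsMulTorsionFree.zpow_eq_one_iff] at hj
  simp [hj.resolve_left hψk]

theorem finiteIndex_zpowers_sup_map_ker [M.FiniteIndex] {k : ℕ} (hk : g ^ k ∈ M)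
    (hψk : ψ ⟨g ^ k, hk⟩ ≠ 1) : (zpowers g ⊔ ψ.ker.map M.subtype).FiniteIndex := by
  set a := ψ ⟨g ^ k, hk⟩
  have := finiteIndex_zpowers_of_ne_one hψk
  have hC : ((zpowers a).comap ψ).FiniteIndex :=
    ⟨by simpa using relIndex_comap_ne_zero ψ (K := ⊤) (by simpa using FiniteIndex.index_ne_zero)⟩
  have hle : ((zpowers a).comap ψ).map M.subtype ≤ zpowers g ⊔ ψ.ker.map M.subtype := by
    rintro _ ⟨x, hx, rfl⟩
    obtain ⟨j, hj⟩ := mem_zpowers_iff.mp hx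
    have hker : x * (⟨g ^ k, hk⟩ ^ j)⁻¹ ∈ ψ.ker := by
      rw [MonoidHom.mem_ker, map_mul, map_inv, map_zpow, ← hj, mul_inv_cancel]
    rw [coe_subtype, show (x : G) = ↑(x * (⟨g ^ k, hk⟩ ^ j)⁻¹) * (g ^ k) ^ j by simp]
    exact mul_mem (mem_sup_right (mem_map_of_mem _ hker))
      (mem_sup_left (zpow_mem (pow_mem (mem_zpowers g) k) j))
  have : (((zpowers a).comap ψ).map M.subtype).FiniteIndex :=
    ⟨by rw [index_map_subtype]; exact mul_ne_zero hC.index_ne_zero FiniteIndex.index_ne_zero⟩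
  exact finiteIndex_of_le hle

theorem isVirtualRetract_zpowers_of_conj_invariant [M.Normal] [M.FiniteIndex]
    (hψ : ∀ x, ψ (MulAut.conjNormal g x) = ψ x) {k : ℕ} (hk : g ^ k ∈ M)
    (hψk : ψ ⟨g ^ k, hk⟩ ≠ 1) : IsVirtualRetract (zpowers g) := by
  have := finiteIndex_zpowers_sup_map_ker ψ hk hψk
  exact isVirtualRetract_of_le_normalizer (zpowers_le_normalizer_map_ker ψ hψ)
    (zpowers_inf_map_ker_eq_bot ψ hk hψk)

end InvariantCharacter

theorem isVirtualRetract_zpowers_of_isDetectedByVirtualCharacter_pow {g : G} {k : ℕ}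
    (h : IsDetectedByVirtualCharacter (g ^ k)) : IsVirtualRetract (zpowers g) := by
  obtain ⟨L, hL, hgk, χ, hχ⟩ := h
  have hk : k ≠ 0 := by
    rintro rfl
    exact hχ ((congrArg χ (Subtype.ext (pow_zero g))).trans χ.map_one)
  obtain ⟨m, hm, -, hgkm⟩ :=
    L.normalCore.exists_pow_mem_of_index_ne_zero FiniteIndex.index_ne_zero (g ^ k)
  rw [← pow_mul] at hgkm
  let χM := χ.comp (inclusion (normalCore_le L))
  let σ : MulAut L.normalCore := MulAut.conjNormal g
  have hperiod (x) : χM ((σ ^ (k * m)) x) = χM x := by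
    rw [← map_pow]
    exact map_conjNormal_of_mem χM hgkm x
  have hfix : σ ⟨g ^ (k * m), hgkm⟩ = ⟨g ^ (k * m), hgkm⟩ :=
    Subtype.ext (by simp [σ, MulAut.conjNormal_apply, (Commute.self_pow g _).eq])
  have hval : inclusion (normalCore_le L) ⟨g ^ (k * m), hgkm⟩ = ⟨g ^ k, hgk⟩ ^ m :=
    Subtype.ext (pow_mul g k m)
  refine isVirtualRetract_zpowers_of_conj_invariant (χM.orbitProd σ (k * m))
    (χM.orbitProd_aut_invariant σ hperiod) hgkm ?_
  rw [χM.orbitProd_apply_of_fixed _ hfix, MonoidHom.comp_apply, hval, map_pow,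
    ← pow_mul, Ne, pow_eq_one_iff]
  simp [hχ, hk, hm.ne']

end

/-- Lemma 5.3(a): if a finite-index subgroup `K` of `G` has (VRC), then so does `G`. -/
theorem VRC_of_finiteIndex_subgroup {G : Type*} [Group G] (K : Subgroup G)
    (hK : K.FiniteIndex) (hVRC : VRC ↥K) : VRC G := by
  intro g
  by_cases hg : IsOfFinOrder g
  · exact isVirtualRetract_zpowers_of_isOfFinOrder hK hVRC hg
  · obtain ⟨n, hn, -, hgn⟩ := K.exists_pow_mem_of_index_ne_zero hK.index_ne_zero g
    have hgn' : ¬IsOfFinOrder (⟨g ^ n, hgn⟩ : K) := fun h ↦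
      hg ((Submonoid.isOfFinOrder_coe.mpr h).of_pow hn.ne')
    exact isVirtualRetract_zpowers_of_isDetectedByVirtualCharacter_pow
      (((hVRC ⟨g ^ n, hgn⟩).isDetectedByVirtualCharacter hgn').subtype hK)
end

section
/- Let X be a finitely generated virtually abelian group, let Y be an arbitrary group, and let ρ_Y : X × Y → Y denote the natural projection. If H is a subgroup of X × Y such that ρ_Y(H) is a virtual retract of Y, then H is a virtual retract of X × Y. -/
/-- A group is virtually abelian if it has an abelian subgroup of finite index. -/
def VirtuallyAbelian (G : Type*) [Group G] : Prop :=
  ∃ B : Subgroup G, B.FiniteIndex ∧ ∀ x y : ↥B, x * y = y * x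

/-!
Let `A` and `M` be the projections of `H` to `Y` and to `X`, and `N = {x | (x, 1) ∈ H}`, which
`M` normalizes. A subgroup is a virtual retract exactly when it normalizes some subgroup meeting
it trivially whose join with it has finite index (the kernel of a retraction is one). So `A` has
such a complement `D` in `Y`, and once `C ≤ X` is normalized by `M`, meets `N` trivially and
`C ⊔ N` has finite index, `C × D` is such a complement of `H`.

To find `C`, take a normal abelian subgroup `B` of finite index in `X`: a finitely generated
`ℤ`-module on which `M` acts by conjugation through a finite group `Γ`. Maschke's averaging
survives over `ℤ` up to finite index: summing the `Γ`-conjugates of a projection onto the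
saturation of `N ∩ B` gives an equivariant map that is `|Γ|` times the identity there, and the
multiples of its kernel by the order of the torsion subgroup of `B` form `C`.
-/

open Subgroup

open QuotientGroup in
theorem isVirtualRetract_of_le_normalizer_s13 {G : Type*} [Group G] {H N : Subgroup G}
    (hH : H ≤ normalizer N) (hNH : Disjoint N H) (hfin : (H ⊔ N).FiniteIndex) :
    IsVirtualRetract H := by
  have := normal_subgroupOf_of_le_normalizer hH
  have := normal_subgroupOf_sup_of_le_normalizer hH
  let e : ↥(H ⊔ N) ⧸ N.subgroupOf (H ⊔ N) ≃* H :=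
    ((quotientInfEquivProdNormalizerQuotient H N hH).symm.trans
      (quotientMulEquivOfEq (subgroupOf_eq_bot.mpr hNH))).trans quotientBot
  refine ⟨H ⊔ N, le_sup_left, hfin, H.subtype.comp (e.toMonoidHom.comp (mk' _)),
    fun k => (e _).2, fun h hh => ?_⟩
  show ((e (quotientInfEquivProdNormalizerQuotient H N hH (mk ⟨h, hh⟩)) : H) : G) = h
  simp only [e, MulEquiv.trans_apply, MulEquiv.symm_apply_apply]
  rfl

theorem IsVirtualRetract.exists_complement {G : Type*} [Group G] {H : Subgroup G}
    (hH : IsVirtualRetract H) :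
    ∃ N : Subgroup G, H ≤ normalizer N ∧ Disjoint N H ∧ (H ⊔ N).FiniteIndex := by
  obtain ⟨K, hHK, hK, ρ, hρH, hρ⟩ := hH
  refine ⟨ρ.ker.map K.subtype, ?_, ?_, ?_⟩
  · rw [le_normalizer_iff]
    rintro h hh _ ⟨k, hk, rfl⟩
    refine ⟨⟨h, hHK hh⟩ * k * ⟨h, hHK hh⟩⁻¹, ?_, rfl⟩
    simp [MonoidHom.mem_ker.mp hk]
  · rw [disjoint_iff_inf_le]
    rintro _ ⟨⟨k, hk, rfl⟩, hkH⟩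
    rw [Subgroup.coe_subtype, mem_bot, ← hρ k hkH]
    exact hk
  · refine finiteIndex_of_le (H := K) fun k hk => ?_
    have hρk : ρ ⟨k, hk⟩ ∈ H := hρH _
    have : (⟨ρ ⟨k, hk⟩, hHK hρk⟩ : K)⁻¹ * ⟨k, hk⟩ ∈ ρ.ker := by
      simp [hρ _ hρk]
    have := mul_mem_sup hρk (mem_map_of_mem K.subtype this)
    simpa using this

namespace Subgroup

variable {G₁ G₂ : Type*} [Group G₁] [Group G₂] {H : Subgroup (G₁ × G₂)} {C : Subgroup G₁}
  {D : Subgroup G₂}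

theorem finiteIndex_of_comap_inl_of_map_snd (K : Subgroup (G₁ × G₂))
    [(K.comap (MonoidHom.inl G₁ G₂)).FiniteIndex] [(K.map (MonoidHom.snd G₁ G₂)).FiniteIndex] :
    K.FiniteIndex := by
  set K₁ := K.comap (MonoidHom.inl G₁ G₂)
  set K₂ := K.map (MonoidHom.snd G₁ G₂)
  suffices Function.Surjective
      fun q : (G₁ ⧸ K₁) × (G₂ ⧸ K₂) => (QuotientGroup.mk (q.1.out, q.2.out) : _ ⧸ K) by
    have := Finite.of_surjective _ this
    exact finiteIndex_of_finite_quotient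
  rintro ⟨x, y⟩
  obtain ⟨⟨l, m, hml, rfl⟩, hy⟩ := QuotientGroup.mk_out_eq_mul K₂ y
  obtain ⟨⟨d, hd⟩, hx⟩ := QuotientGroup.mk_out_eq_mul K₁ (x * m.1)
  refine ⟨(x * m.1, y), QuotientGroup.eq.mpr ?_⟩
  rw [hx, hy]
  have hd' : ((d, 1) : G₁ × G₂) ∈ K := hd
  convert mul_mem (inv_mem hd') (inv_mem hml) using 1
  ext <;> simp [mul_assoc]

theorem map_fst_le_normalizer_comap_inl (H : Subgroup (G₁ × G₂)) :
    H.map (MonoidHom.fst G₁ G₂) ≤ normalizer (H.comap (MonoidHom.inl G₁ G₂)) := by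
  rw [le_normalizer_iff]
  rintro _ ⟨⟨m, a⟩, hma, rfl⟩ n hn
  have := mul_mem (mul_mem hma hn) (inv_mem hma)
  simpa using this

theorem le_normalizer_prod (hC : H.map (MonoidHom.fst G₁ G₂) ≤ normalizer C)
    (hD : H.map (MonoidHom.snd G₁ G₂) ≤ normalizer D) : H ≤ normalizer (C.prod D) := by
  rw [le_normalizer_iff] at *
  rintro ⟨m, a⟩ hma ⟨c, d⟩ ⟨hc, hd⟩
  exact ⟨hC m ⟨_, hma, rfl⟩ c hc, hD a ⟨_, hma, rfl⟩ d hd⟩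

theorem disjoint_prod_of_comap_inl_of_map_snd (hC : Disjoint C (H.comap (MonoidHom.inl G₁ G₂)))
    (hD : Disjoint D (H.map (MonoidHom.snd G₁ G₂))) : Disjoint (C.prod D) H := by
  rw [disjoint_iff_inf_le]
  rintro ⟨c, d⟩ ⟨⟨hc, hd⟩, hcd⟩
  obtain rfl : d = 1 := hD.le_bot ⟨hd, _, hcd, rfl⟩
  obtain rfl : c = 1 := hC.le_bot ⟨hc, hcd⟩
  rfl

theorem finiteIndex_sup_prod (hC : (C ⊔ H.comap (MonoidHom.inl G₁ G₂)).FiniteIndex)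
    (hD : (H.map (MonoidHom.snd G₁ G₂) ⊔ D).FiniteIndex) : (H ⊔ C.prod D).FiniteIndex := by
  have : ((H ⊔ C.prod D).comap (MonoidHom.inl G₁ G₂)).FiniteIndex :=
    finiteIndex_of_le (sup_le (fun c hc => mem_sup_right ⟨hc, one_mem D⟩) (comap_mono le_sup_left))
  have : ((H ⊔ C.prod D).map (MonoidHom.snd G₁ G₂)).FiniteIndex := by
    refine finiteIndex_of_le (H := H.map (MonoidHom.snd G₁ G₂) ⊔ D) ?_
    rw [Subgroup.map_sup]
    exact sup_le_sup_left (fun d hd => ⟨(1, d), ⟨one_mem C, hd⟩, rfl⟩) _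
  exact finiteIndex_of_comap_inl_of_map_snd _

end Subgroup

namespace Submodule

variable {R M : Type*} [CommRing R] [AddCommGroup M] [Module R M]

def saturation (N : Submodule R M) : Submodule R M :=
  (torsion R (M ⧸ N)).comap N.mkQ

theorem mem_saturation {N : Submodule R M} {x : M} :
    x ∈ N.saturation ↔ ∃ a : nonZeroDivisors R, a • x ∈ N := by
  simp only [saturation, mem_comap, mkQ_apply, mem_torsion_iff, ← Quotient.mk_smul,
    Quotient.mk_eq_zero]

theorem le_saturation (N : Submodule R M) : N ≤ N.saturation :=
  fun x hx => mem_saturation.mpr ⟨1, by rwa [one_smul]⟩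

theorem saturation_le_comap_saturation {N : Submodule R M} {f : M →ₗ[R] M}
    (hf : N ≤ N.comap f) : N.saturation ≤ N.saturation.comap f := by
  intro x hx
  obtain ⟨a, hax⟩ := mem_saturation.mp hx
  exact mem_saturation.mpr ⟨a, by simpa using hf hax⟩

theorem exists_isProj_saturation [IsDomain R] [IsPrincipalIdealRing R] [Module.Finite R M]
    (N : Submodule R M) : ∃ p : M →ₗ[R] M, LinearMap.IsProj N.saturation p := by
  let q := (torsion R (M ⧸ N)).mkQ ∘ₗ N.mkQ
  have hq : LinearMap.ker q = N.saturation := by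
    rw [LinearMap.ker_comp, ker_mkQ]; rfl
  obtain ⟨s, hs⟩ := Module.projective_lifting_property q LinearMap.id
    ((torsion R (M ⧸ N)).mkQ_surjective.comp N.mkQ_surjective)
  refine ⟨LinearMap.id - s ∘ₗ q, fun x => ?_, fun x hx => ?_⟩
  · rw [← hq, LinearMap.mem_ker]
    have : q (s (q x)) = q x := congr($hs (q x))
    simp [this]
  · rw [← hq, LinearMap.mem_ker] at hx
    simp [hx]

theorem exists_zsmul_eq_zero_of_mem_torsion {V : Type*} [AddCommGroup V] [Module.Finite ℤ V] :
    ∃ e : ℤ, e ≠ 0 ∧ ∀ v ∈ torsion ℤ V, e • v = 0 := by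
  have : Finite (torsion ℤ V) := Module.finite_of_fg_torsion _ torsion_isTorsion
  refine ⟨Nat.card (torsion ℤ V), Nat.cast_ne_zero.mpr Nat.card_pos.ne', fun v hv => ?_⟩
  simpa using congr(Subtype.val $(card_nsmul_eq_zero' (G := torsion ℤ V) (x := ⟨v, hv⟩)))

end Submodule

namespace Representation

variable {R Γ V : Type*} [CommSemiring R] [Group Γ] [Fintype Γ] [AddCommMonoid V] [Module R V]

theorem exists_equivariant_of_isProj (ρ : Representation R Γ V) {S : Submodule R V}
    (hS : ∀ g, ∀ v ∈ S, ρ g v ∈ S) {p : V →ₗ[R] V} (hp : LinearMap.IsProj S p) :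
    ∃ π : V →ₗ[R] V, (∀ v, π v ∈ S) ∧ (∀ v ∈ S, π v = (Fintype.card Γ : R) • v) ∧
      ∀ g v, π (ρ g v) = ρ g (π v) := by
  refine ⟨∑ g, ρ g ∘ₗ p ∘ₗ ρ g⁻¹, fun v => ?_, fun v hv => ?_, fun h v => ?_⟩
  · simp only [LinearMap.sum_apply, LinearMap.comp_apply]
    exact S.sum_mem fun g _ => hS g _ (hp.map_mem _)
  · simp [hp.map_id _ (hS _ v hv), Nat.cast_smul_eq_nsmul]
  · simp only [LinearMap.sum_apply, LinearMap.comp_apply, map_sum]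
    refine Fintype.sum_bijective (h⁻¹ * ·) (Group.mulLeft_bijective _) _ _ fun g => ?_
    simp only [← Module.End.mul_apply, ← map_mul, ← mul_assoc, mul_inv_cancel, one_mul,
      mul_inv_rev, inv_inv]

end Representation

open Submodule in
theorem Representation.exists_invariant_complement {Γ V : Type*} [Group Γ] [Finite Γ]
    [AddCommGroup V] [Module.Finite ℤ V] (ρ : Representation ℤ Γ V) {N : Submodule ℤ V}
    (hN : ∀ g, ∀ v ∈ N, ρ g v ∈ N) :
    ∃ C : Submodule ℤ V, (∀ g, ∀ v ∈ C, ρ g v ∈ C) ∧ Disjoint C N ∧ Finite (V ⧸ (C ⊔ N)) := by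
  have := Fintype.ofFinite Γ
  obtain ⟨p, hp⟩ := N.exists_isProj_saturation
  obtain ⟨π, hπS, hπ, hπρ⟩ := ρ.exists_equivariant_of_isProj
    (fun g => saturation_le_comap_saturation (f := ρ g) (hN g)) hp
  obtain ⟨e, he, heT⟩ := exists_zsmul_eq_zero_of_mem_torsion (V := V)
  set n : ℤ := (Fintype.card Γ : ℤ)
  have hn : n ≠ 0 := by simp [n]
  -- `ker π` meets the saturation of `N` only in torsion, which multiplication by `e` kills.
  refine ⟨(LinearMap.ker π).map (e • LinearMap.id), ?_, ?_, ?_⟩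
  · rintro g _ ⟨w, hw, rfl⟩
    rw [SetLike.mem_coe, LinearMap.mem_ker] at hw
    exact ⟨ρ g w, by simp [hπρ, hw], by simp⟩
  · rw [disjoint_iff_inf_le]
    rintro _ ⟨⟨w, hw, rfl⟩, hwN⟩
    simp only [LinearMap.smul_apply, LinearMap.id_apply] at hw hwN ⊢
    have hw' : (n * e) • w = 0 := by
      rw [mul_smul, ← hπ _ (N.le_saturation hwN), map_zsmul, hw, smul_zero]
    refine heT w ((mem_torsion_iff w).mpr ⟨⟨n * e, ?_⟩, hw'⟩)
    exact mem_nonZeroDivisors_of_ne_zero (mul_ne_zero hn he)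
  · refine Module.finite_of_fg_torsion _ fun x => ?_
    obtain ⟨v, rfl⟩ := mkQ_surjective _ x
    obtain ⟨j, hj⟩ := mem_saturation.mp (hπS v)
    refine ⟨j * ⟨e * n, mem_nonZeroDivisors_of_ne_zero (mul_ne_zero he hn)⟩, ?_⟩
    rw [Submonoid.smul_def, ← map_smul, mkQ_apply, Quotient.mk_eq_zero, Submonoid.coe_mul]
    have hker : n • v - π v ∈ LinearMap.ker π := by
      simp [hπ _ (hπS v)]
    have : ((j : ℤ) * (e * n)) • v = (j : ℤ) • e • (n • v - π v) + e • (j : ℤ) • π v := by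
      module
    rw [this]
    exact add_mem (mem_sup_left (smul_mem _ _ (mem_map_of_mem hker)))
      (mem_sup_right (N.smul_mem e hj))

theorem CommGroup.exists_invariant_complement {Γ A : Type*} [Group Γ] [Finite Γ] [CommGroup A]
    [Group.FG A] [MulDistribMulAction Γ A] {N : Subgroup A} (hN : ∀ g : Γ, ∀ a ∈ N, g • a ∈ N) :
    ∃ C : Subgroup A, (∀ g : Γ, ∀ a ∈ C, g • a ∈ C) ∧ Disjoint C N ∧ (C ⊔ N).FiniteIndex := by
  have : Module.Finite ℤ (Additive A) :=
    Module.Finite.iff_addGroup_fg.mpr (GroupFG.iff_add_fg.mp inferInstance)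
  let e : Subgroup A ≃o Submodule ℤ (Additive A) :=
    Subgroup.toAddSubgroup.trans AddSubgroup.toIntSubmodule
  obtain ⟨C, hCΓ, hCN, hfin⟩ :=
    (Representation.ofMulDistribMulAction Γ A).exists_invariant_complement (N := e N)
      fun g a ha => hN g _ ha
  refine ⟨e.symm C, fun g a ha => hCΓ g (Additive.ofMul a) ha, ?_, ?_⟩
  · rwa [← disjoint_map_orderIso_iff e, e.apply_symm_apply]
  · have : toAddSubgroup (e.symm C ⊔ N) = (C ⊔ e N).toAddSubgroup := by
      rw [SupHomClass.map_sup, Submodule.sup_toAddSubgroup]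
      rfl
    rw [← finiteIndex_toAddSubgroup_iff, this]
    exact AddSubgroup.finiteIndex_iff_finite_quotient.mpr hfin

theorem VirtuallyAbelian.exists_normal_isMulCommutative {G : Type*} [Group G]
    (hG : VirtuallyAbelian G) :
    ∃ B : Subgroup G, B.Normal ∧ B.FiniteIndex ∧ IsMulCommutative B := by
  obtain ⟨B, hB, hcomm⟩ := hG
  refine ⟨B.normalCore, B.normalCore_normal, inferInstance,
    .of_setLike_mul_comm fun a ha b hb => ?_⟩
  exact congrArg Subtype.val (hcomm ⟨a, B.normalCore_le ha⟩ ⟨b, B.normalCore_le hb⟩)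

theorem Subgroup.finite_range_conjNormal {G : Type*} [Group G] (B : Subgroup G) [B.Normal]
    [B.FiniteIndex] [IsMulCommutative B] : Finite (MulAut.conjNormal (H := B)).range := by
  have hB : B ≤ (MulAut.conjNormal (H := B)).ker := fun b hb => by
    ext x
    simp [MulAut.conjNormal_apply, setLike_mul_comm hb x.2]
  have := finiteIndex_of_le hB
  refine Nat.finite_of_card_ne_zero ?_
  rw [← index_ker]
  exact FiniteIndex.index_ne_zero

open scoped IsMulCommutative in
theorem VirtuallyAbelian.exists_complement {X : Type*} [Group X] [Group.FG X]
    (hX : VirtuallyAbelian X) {M N : Subgroup X} (hMN : M ≤ normalizer N) :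
    ∃ C : Subgroup X, M ≤ normalizer C ∧ Disjoint C N ∧ (C ⊔ N).FiniteIndex := by
  obtain ⟨B, _, _, _⟩ := hX.exists_normal_isMulCommutative
  have : Group.FG B := fg_of_index_ne_zero B
  let Γ := M.map (MulAut.conjNormal (H := B))
  have := B.finite_range_conjNormal
  have : Finite Γ := Finite.Set.subset _ (map_le_range _ M)
  obtain ⟨C, hCΓ, hCN, _⟩ := CommGroup.exists_invariant_complement (Γ := Γ) (A := B)
    (N := N.subgroupOf B) (by
      rintro ⟨_, m, hm, rfl⟩ b hb
      exact le_normalizer_iff.mp hMN m hm b hb)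
  refine ⟨C.map B.subtype, le_normalizer_iff.mpr ?_, ?_, ?_⟩
  · rintro m hm _ ⟨b, hb, rfl⟩
    exact ⟨_, hCΓ ⟨_, mem_map_of_mem _ hm⟩ b hb, MulAut.conjNormal_apply m b⟩
  · rw [disjoint_iff_inf_le]
    rintro _ ⟨⟨b, hb, rfl⟩, hbN⟩
    simpa using hCN.le_bot ⟨hb, hbN⟩
  · have hle : (C ⊔ N.subgroupOf B).map B.subtype ≤ C.map B.subtype ⊔ N := by
      rw [Subgroup.map_sup, subgroupOf_map_subtype]
      exact sup_le_sup_left inf_le_left _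
    have : ((C ⊔ N.subgroupOf B).map B.subtype).FiniteIndex := by
      rw [finiteIndex_iff, index_map_subtype]
      exact mul_ne_zero FiniteIndex.index_ne_zero FiniteIndex.index_ne_zero
    exact finiteIndex_of_le hle

/-- Lemma 5.9: if `X` is finitely generated virtually abelian, `Y` is any group and
`H ≤ X × Y` projects to a virtual retract of `Y`, then `H` is a virtual retract of `X × Y`. -/
theorem virtualRetract_of_projection_virtualRetract {X Y : Type*} [Group X] [Group Y]
    (hXfg : Group.FG X) (hXva : VirtuallyAbelian X) (H : Subgroup (X × Y))
    (h : IsVirtualRetract (Subgroup.map (MonoidHom.snd X Y) H)) :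
    IsVirtualRetract H := by
  obtain ⟨D, hAD, hDA, hD⟩ := h.exists_complement
  obtain ⟨C, hMC, hCN, hC⟩ := hXva.exists_complement (map_fst_le_normalizer_comap_inl H)
  exact isVirtualRetract_of_le_normalizer_s13 (le_normalizer_prod hMC hAD)
    (disjoint_prod_of_comap_inl_of_map_snd hCN hDA) (finiteIndex_sup_prod hC hD)
end
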